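/- arXiv:1707.03301 — 2 statements merged into one kernel-verified Lean document; each statement's English description precedes it below -/
import Mathlib

section
/- Let f_k (1 ≤ k ≤ K) be densities of N(μ_k, σ_k²) with μ_k > 0 and σ_k² ≥ 1, f_0 the density of N(0,1), and weights w_k > 0 with ∑ w_k = 1. Then x ↦ ∑_{k=1}^K w_k f_k(x)/f_0(x) is monotonically increasing on [0, ∞). -/
/-- Density of the Gaussian distribution N(μ, σ²). -/
noncomputable def gaussDensity (μ σ x : ℝ) : ℝ :=
  (1 / (σ * Real.sqrt (2 * Real.pi))) * Real.exp (-(x - μ)^2 / (2 * σ^2))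

lemma gaussDensity_pos (μ σ x : ℝ) (hσ : 0 < σ) : 0 < gaussDensity μ σ x := by
  unfold gaussDensity
  have h2π : 0 < Real.sqrt (2 * Real.pi) := Real.sqrt_pos.mpr (by positivity)
  positivity

lemma ratio_mono (μ σ : ℝ) (hμ : 0 < μ) (hσ : 1 ≤ σ^2) (hσpos : 0 < σ)
    (x y : ℝ) (hx : 0 ≤ x) (hxy : x ≤ y) :
    gaussDensity μ σ x / gaussDensity 0 1 x ≤ gaussDensity μ σ y / gaussDensity 0 1 y := by
  rw [div_le_div_iff₀ (gaussDensity_pos _ _ _ one_pos) (gaussDensity_pos _ _ _ one_pos)]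
  unfold gaussDensity
  have h2π : 0 < Real.sqrt (2 * Real.pi) := Real.sqrt_pos.mpr (by positivity)
  have key : Real.exp (-(x - μ)^2 / (2 * σ^2)) * Real.exp (-(y - 0)^2 / (2 * 1^2)) ≤
      Real.exp (-(y - μ)^2 / (2 * σ^2)) * Real.exp (-(x - 0)^2 / (2 * 1^2)) := by
    rw [← Real.exp_add, ← Real.exp_add, Real.exp_le_exp]
    have hσ2 : (0:ℝ) < σ^2 := by positivity
    rw [div_add_div _ _ (by positivity : (2:ℝ) * σ^2 ≠ 0) (by norm_num : (2:ℝ) * 1^2 ≠ 0),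
      div_add_div _ _ (by positivity : (2:ℝ) * σ^2 ≠ 0) (by norm_num : (2:ℝ) * 1^2 ≠ 0),
      div_le_div_iff₀ (by positivity) (by positivity)]
    nlinarith [mul_le_mul_of_nonneg_left (mul_self_le_mul_self hx hxy) (sub_nonneg.mpr hσ),
      mul_le_mul_of_nonneg_left hxy hμ.le]
  calc 1 / (σ * Real.sqrt (2 * Real.pi)) * Real.exp (-(x - μ)^2 / (2 * σ^2)) *
        (1 / (1 * Real.sqrt (2 * Real.pi)) * Real.exp (-(y - 0)^2 / (2 * 1^2)))
      = (1 / (σ * Real.sqrt (2 * Real.pi)) * (1 / (1 * Real.sqrt (2 * Real.pi)))) *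
        (Real.exp (-(x - μ)^2 / (2 * σ^2)) * Real.exp (-(y - 0)^2 / (2 * 1^2))) := by ring
    _ ≤ (1 / (σ * Real.sqrt (2 * Real.pi)) * (1 / (1 * Real.sqrt (2 * Real.pi)))) *
        (Real.exp (-(y - μ)^2 / (2 * σ^2)) * Real.exp (-(x - 0)^2 / (2 * 1^2))) := by
        apply mul_le_mul_of_nonneg_left key; positivity
    _ = 1 / (σ * Real.sqrt (2 * Real.pi)) * Real.exp (-(y - μ)^2 / (2 * σ^2)) *
        (1 / (1 * Real.sqrt (2 * Real.pi)) * Real.exp (-(x - 0)^2 / (2 * 1^2))) := by ring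

/-- If `f_k = N(μ_k, σ_k²)` with `μ_k > 0`, `σ_k² ≥ 1` for `1 ≤ k ≤ K`, `f_0 = N(0,1)`,
and `w_k > 0` with `∑ w_k = 1`, then `x ↦ ∑_k w_k f_k(x) / f_0(x)` is monotonically
increasing on `[0, ∞)`. -/
theorem stmt1 (K : ℕ) (μ σ w : Fin K → ℝ)
    (hμ : ∀ k, 0 < μ k) (hσ : ∀ k, 1 ≤ (σ k)^2) (hσpos : ∀ k, 0 < σ k)
    (hw : ∀ k, 0 < w k) (hwsum : ∑ k, w k = 1) :
    MonotoneOn (fun x => ∑ k, w k * (gaussDensity (μ k) (σ k) x / gaussDensity 0 1 x))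
      (Set.Ici (0:ℝ)) := by
  intro x hx y _ hxy
  apply Finset.sum_le_sum
  intro k _
  exact mul_le_mul_of_nonneg_left
    (ratio_mono (μ k) (σ k) (hμ k) (hσ k) (hσpos k) x y hx hxy) (hw k).le
end

section
/- Let g_k(x) = f_k(x)/f_0(x) where f_k is the N(μ_k, σ_k²) density with μ_k < 0, σ_k² ≥ 1, and f_0 the N(0,1) density. Then any finite convex combination ∑ w_k g_k is monotonically decreasing on (-∞, 0]. -/
lemma gaussDensity_div_standard (μ σ x : ℝ) (hσ : 0 < σ) :
    gaussDensity μ σ x / gaussDensity 0 1 x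
      = σ⁻¹ * Real.exp (x ^ 2 / 2 - (x - μ) ^ 2 / (2 * σ ^ 2)) := by
  rw [div_eq_iff (by unfold gaussDensity; positivity), gaussDensity, gaussDensity]
  field_simp
  rw [← Real.exp_add]
  congr 1
  field_simp
  ring

lemma gaussLogRatio_antitoneOn {μ σ : ℝ} (hμ : μ ≤ 0) (hσ : 1 ≤ σ ^ 2) :
    AntitoneOn (fun x : ℝ => x ^ 2 / 2 - (x - μ) ^ 2 / (2 * σ ^ 2)) (Set.Iic 0) := by
  intro x hx y hy hxy
  have hσ0 : σ ≠ 0 := by rintro rfl; norm_num at hσ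
  have hdiff : (x ^ 2 / 2 - (x - μ) ^ 2 / (2 * σ ^ 2)) - (y ^ 2 / 2 - (y - μ) ^ 2 / (2 * σ ^ 2))
      = (y - x) * (-(x + y) * (σ ^ 2 - 1) - 2 * μ) / (2 * σ ^ 2) := by
    field_simp
    ring
  have hfactor : 0 ≤ -(x + y) * (σ ^ 2 - 1) - 2 * μ := by
    nlinarith [Set.mem_Iic.mp hx, Set.mem_Iic.mp hy]
  rw [← sub_nonneg, hdiff]
  exact div_nonneg (mul_nonneg (sub_nonneg.mpr hxy) hfactor) (by positivity)

lemma gaussDensity_div_standard_antitoneOn {μ σ : ℝ} (hμ : μ ≤ 0) (hσ : 1 ≤ σ ^ 2)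
    (hσpos : 0 < σ) :
    AntitoneOn (fun x => gaussDensity μ σ x / gaussDensity 0 1 x) (Set.Iic 0) := by
  intro x hx y hy hxy
  simp only [gaussDensity_div_standard μ σ _ hσpos]
  exact mul_le_mul_of_nonneg_left
    (Real.exp_le_exp.mpr (gaussLogRatio_antitoneOn hμ hσ hx hy hxy)) (by positivity)

theorem stmt18_general (K : ℕ) (μ σ w : Fin K → ℝ)
    (hμ : ∀ k, μ k < 0) (hσ : ∀ k, 1 ≤ (σ k)^2) (hσpos : ∀ k, 0 < σ k)
    (hw : ∀ k, 0 < w k) :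
    AntitoneOn (fun x => ∑ k, w k * (gaussDensity (μ k) (σ k) x / gaussDensity 0 1 x))
      (Set.Iic (0:ℝ)) := by
  intro x hx y hy hxy
  refine Finset.sum_le_sum fun k _ => mul_le_mul_of_nonneg_left ?_ (hw k).le
  exact gaussDensity_div_standard_antitoneOn (hμ k).le (hσ k) (hσpos k) hx hy hxy

/-- Mirror of Theorem 1: if `g_k = f_k / f_0` with `f_k = N(μ_k, σ_k²)`, `μ_k < 0`,
`σ_k² ≥ 1`, `f_0 = N(0,1)`, then any finite convex combination `∑ w_k g_k` is monotonically
decreasing on `(-∞, 0]`. -/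
theorem stmt18 (K : ℕ) (μ σ w : Fin K → ℝ)
    (hμ : ∀ k, μ k < 0) (hσ : ∀ k, 1 ≤ (σ k)^2) (hσpos : ∀ k, 0 < σ k)
    (hw : ∀ k, 0 < w k) (hwsum : ∑ k, w k = 1) :
    AntitoneOn (fun x => ∑ k, w k * (gaussDensity (μ k) (σ k) x / gaussDensity 0 1 x))
      (Set.Iic (0:ℝ)) :=
  stmt18_general K μ σ w hμ hσ hσpos hw
end
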